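/- arXiv:2312.16452 — 2 statements merged into one kernel-verified Lean document; each statement's English description precedes it below -/
import Mathlib

section
/- Let ΛQ(y) = 2y/(1+y²) and Γ(y) = (2y/(1+y²))·( y²/8 + (log y)/2 − 1/(8y²) ). For any continuous f : [0,∞) → ℝ define (H⁻¹f)(y) = ΛQ(y) ∫₀^y f(x)Γ(x) x dx − Γ(y) ∫₀^y f(x)ΛQ(x) x dx. Then H⁻¹f is twice continuously differentiable on (0,∞) and satisfies H(H⁻¹f) = f on (0,∞), i.e. −(H⁻¹f)'' − (1/y)(H⁻¹f)' + V(y)(H⁻¹f)/y² = f(y) for all y > 0. Moreover (H⁻¹f)(y) = O(y²) as y → 0⁺. -/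
/-!
`ΛQ` and `Γ = ΛQ · w` span the kernel of `H` on `(0,∞)`: `Γ` comes from `ΛQ` by reduction
of order, `w' = 1 / (y ΛQ²)`, so that their Wronskian is `y (ΛQ Γ' - ΛQ' Γ) = 1`.
`H⁻¹f = ΛQ A - Γ B` is the variation of parameters formula: since `A' = f y Γ` and
`B' = f y ΛQ`, the terms containing `A'` and `B'` cancel in `(H⁻¹f)' = ΛQ' A - Γ' B`, so `H⁻¹f`
is `C²` although `A` and `B` are only `C¹`, and `(H⁻¹f)''` differs from `ΛQ'' A - Γ'' B` by
`-y f (ΛQ Γ' - ΛQ' Γ) = -f`, which yields `H (H⁻¹f) = f`.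
Near `0`, `ΛQ = O(y)`, `A = O(y)`, `Γ = O(1/y)` and `B = O(y³)`.
-/

open Real Filter Asymptotics

/-- The resonance `ΛQ(y) = 2y/(1+y²)`. -/
noncomputable def LamQ (y : ℝ) : ℝ := 2 * y / (1 + y ^ 2)

/-- The potential `V(y) = (y⁴ - 6y² + 1)/(1+y²)²`. -/
noncomputable def Vfun (y : ℝ) : ℝ := (y ^ 4 - 6 * y ^ 2 + 1) / (1 + y ^ 2) ^ 2

/-- The second element `Γ` of the kernel of `H`. -/
noncomputable def Gam (y : ℝ) : ℝ :=
  (2 * y / (1 + y ^ 2)) * (y ^ 2 / 8 + Real.log y / 2 - 1 / (8 * y ^ 2))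

/-- The inverse `H⁻¹f` given by variation of parameters. -/
noncomputable def Hinv (f : ℝ → ℝ) (y : ℝ) : ℝ :=
  LamQ y * (∫ x in (0:ℝ)..y, f x * Gam x * x) - Gam y * (∫ x in (0:ℝ)..y, f x * LamQ x * x)

open Set Topology MeasureTheory

noncomputable def radialOp (V u : ℝ → ℝ) (y : ℝ) : ℝ :=
  -(deriv (deriv u) y) - (1 / y) * deriv u y + V y * u y / y ^ 2

section VariationOfParameters

variable {u₁ u₂ g A B : ℝ → ℝ}

theorem hasDerivAt_mul_sub_mul {v₁ v₂ : ℝ → ℝ} {y : ℝ} (hv₁ : DifferentiableAt ℝ v₁ y)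
    (hv₂ : DifferentiableAt ℝ v₂ y) (hA : HasDerivAt A (g y * u₂ y) y)
    (hB : HasDerivAt B (g y * u₁ y) y) :
    HasDerivAt (fun x => v₁ x * A x - v₂ x * B x)
      (deriv v₁ y * A y - deriv v₂ y * B y + g y * (v₁ y * u₂ y - v₂ y * u₁ y)) y :=
  ((hv₁.hasDerivAt.mul hA).sub (hv₂.hasDerivAt.mul hB)).congr_deriv (by ring)

variable {s : Set ℝ} (hs : IsOpen s) (hu₁ : ContDiffOn ℝ 2 u₁ s) (hu₂ : ContDiffOn ℝ 2 u₂ s)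
  (hA : ∀ y ∈ s, HasDerivAt A (g y * u₂ y) y) (hB : ∀ y ∈ s, HasDerivAt B (g y * u₁ y) y)
include hs hu₁ hu₂ hA hB

theorem hasDerivAt_variationOfParameters {y : ℝ} (hy : y ∈ s) :
    HasDerivAt (fun x => u₁ x * A x - u₂ x * B x) (deriv u₁ y * A y - deriv u₂ y * B y) y := by
  have h := hasDerivAt_mul_sub_mul (hu₁.differentiableOn two_ne_zero y hy |>.differentiableAt
    (hs.mem_nhds hy)) (hu₂.differentiableOn two_ne_zero y hy |>.differentiableAt
    (hs.mem_nhds hy)) (hA y hy) (hB y hy)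
  exact h.congr_deriv (by ring)

theorem hasDerivAt_deriv_variationOfParameters {y : ℝ} (hy : y ∈ s) :
    HasDerivAt (deriv fun x => u₁ x * A x - u₂ x * B x)
      (deriv (deriv u₁) y * A y - deriv (deriv u₂) y * B y
        - g y * (u₁ y * deriv u₂ y - deriv u₁ y * u₂ y)) y := by
  have hderiv (u : ℝ → ℝ) (hu : ContDiffOn ℝ 2 u s) : DifferentiableAt ℝ (deriv u) y :=
    ((hu.deriv_of_isOpen hs (by norm_num) : ContDiffOn ℝ 1 (deriv u) s).differentiableOn
      one_ne_zero y hy).differentiableAt (hs.mem_nhds hy)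
  have h := hasDerivAt_mul_sub_mul (hderiv u₁ hu₁) (hderiv u₂ hu₂) (hA y hy) (hB y hy)
  refine (h.congr_of_eventuallyEq ?_).congr_deriv (by ring)
  filter_upwards [hs.mem_nhds hy] with x hx
  exact (hasDerivAt_variationOfParameters hs hu₁ hu₂ hA hB hx).deriv

theorem contDiffOn_variationOfParameters (hg : ContinuousOn g s) :
    ContDiffOn ℝ 2 (fun x => u₁ x * A x - u₂ x * B x) s := by
  have hC1 {C u : ℝ → ℝ} (hu : ContinuousOn u s) (hC : ∀ y ∈ s, HasDerivAt C (g y * u y) y) :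
      ContDiffOn ℝ 1 C s := by
    rw [show (1 : WithTop ℕ∞) = 0 + 1 from rfl, contDiffOn_succ_iff_deriv_of_isOpen hs]
    refine ⟨fun y hy => (hC y hy).differentiableAt.differentiableWithinAt, by simp, ?_⟩
    exact contDiffOn_zero.2 ((hg.mul hu).congr fun y hy => (hC y hy).deriv)
  rw [show (2 : WithTop ℕ∞) = 1 + 1 from rfl, contDiffOn_succ_iff_deriv_of_isOpen hs]
  refine ⟨fun y hy => (hasDerivAt_variationOfParameters hs hu₁ hu₂ hA hB hy).differentiableAt
    |>.differentiableWithinAt, by simp, ?_⟩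
  refine ContDiffOn.congr ?_ fun y hy =>
    (hasDerivAt_variationOfParameters hs hu₁ hu₂ hA hB hy).deriv
  exact ((hu₁.deriv_of_isOpen hs le_rfl).mul (hC1 hu₂.continuousOn hA)).sub
    ((hu₂.deriv_of_isOpen hs le_rfl).mul (hC1 hu₁.continuousOn hB))

theorem radialOp_variationOfParameters {V : ℝ → ℝ} {y : ℝ} (hy : y ∈ s)
    (h₁ : radialOp V u₁ y = 0) (h₂ : radialOp V u₂ y = 0)
    (hW : y * (u₁ y * deriv u₂ y - deriv u₁ y * u₂ y) = 1) :
    radialOp V (fun x => u₁ x * A x - u₂ x * B x) y = g y / y := by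
  have hW' : u₁ y * deriv u₂ y - deriv u₁ y * u₂ y = 1 / y :=
    (eq_div_iff (by rintro rfl; simp at hW)).2 (by linear_combination hW)
  unfold radialOp at *
  rw [(hasDerivAt_deriv_variationOfParameters hs hu₁ hu₂ hA hB hy).deriv,
    (hasDerivAt_variationOfParameters hs hu₁ hu₂ hA hB hy).deriv]
  linear_combination A y * h₁ - B y * h₂ + g y * hW'

end VariationOfParameters

theorem contDiff_LamQ {n : WithTop ℕ∞} : ContDiff ℝ n LamQ := by
  unfold LamQ
  fun_prop (disch := intro x; positivity)

theorem hasDerivAt_LamQ (y : ℝ) : HasDerivAt LamQ ((2 - 2 * y ^ 2) / (1 + y ^ 2) ^ 2) y := by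
  have h := ((hasDerivAt_id y).const_mul 2).div ((hasDerivAt_pow 2 y).const_add 1)
    (by positivity : 1 + y ^ 2 ≠ 0)
  exact h.congr_deriv (by simp only [id]; field_simp; ring)

theorem deriv_LamQ : deriv LamQ = fun y => (2 - 2 * y ^ 2) / (1 + y ^ 2) ^ 2 :=
  funext fun y => (hasDerivAt_LamQ y).deriv

theorem hasDerivAt_deriv_LamQ (y : ℝ) :
    HasDerivAt (deriv LamQ) ((4 * y ^ 3 - 12 * y) / (1 + y ^ 2) ^ 3) y := by
  rw [deriv_LamQ]
  have h := (((hasDerivAt_pow 2 y).const_mul 2).const_sub 2).div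
    (((hasDerivAt_pow 2 y).const_add 1).pow 2) (by positivity : (1 + y ^ 2) ^ 2 ≠ 0)
  exact h.congr_deriv (by simp only [Pi.pow_apply]; field_simp; ring)

theorem radialOp_LamQ {y : ℝ} (hy : y ≠ 0) : radialOp Vfun LamQ y = 0 := by
  rw [radialOp, (hasDerivAt_deriv_LamQ y).deriv, deriv_LamQ, LamQ, Vfun]
  field_simp
  ring

noncomputable def GamFactor (y : ℝ) : ℝ := y ^ 2 / 8 + Real.log y / 2 - 1 / (8 * y ^ 2)

theorem Gam_eq_LamQ_mul (y : ℝ) : Gam y = LamQ y * GamFactor y := rfl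

theorem contDiffOn_Gam {n : WithTop ℕ∞} : ContDiffOn ℝ n Gam {0}ᶜ := by
  unfold Gam
  fun_prop (disch := first | (intro x; positivity) | (intro x hx; simp at hx; positivity))

theorem hasDerivAt_GamFactor {y : ℝ} (hy : y ≠ 0) :
    HasDerivAt GamFactor ((1 + y ^ 2) ^ 2 / (4 * y ^ 3)) y := by
  have h := (((hasDerivAt_pow 2 y).div_const 8).add ((hasDerivAt_log hy).div_const 2)).sub
    ((hasDerivAt_const y (1 : ℝ)).div ((hasDerivAt_pow 2 y).const_mul 8) (by positivity))
  exact h.congr_deriv (by field_simp; ring)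

theorem hasDerivAt_Gam {y : ℝ} (hy : y ≠ 0) :
    HasDerivAt Gam (deriv LamQ y * GamFactor y + (1 + y ^ 2) / (2 * y ^ 2)) y := by
  have h := (hasDerivAt_LamQ y).mul (hasDerivAt_GamFactor hy)
  refine h.congr_deriv ?_
  rw [deriv_LamQ, LamQ]
  field_simp
  ring

theorem hasDerivAt_deriv_Gam {y : ℝ} (hy : y ≠ 0) :
    HasDerivAt (deriv Gam) (deriv (deriv LamQ) y * GamFactor y
      + deriv LamQ y * ((1 + y ^ 2) ^ 2 / (4 * y ^ 3)) - 1 / y ^ 3) y := by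
  have h := ((hasDerivAt_deriv_LamQ y).mul (hasDerivAt_GamFactor hy)).add
    ((((hasDerivAt_pow 2 y).const_add 1).div ((hasDerivAt_pow 2 y).const_mul 2) (by positivity)))
  refine (h.congr_of_eventuallyEq ?_).congr_deriv ?_
  · filter_upwards [isOpen_ne.mem_nhds hy] with x hx
    exact (hasDerivAt_Gam hx).deriv
  · rw [(hasDerivAt_deriv_LamQ y).deriv]
    field_simp
    ring

theorem radialOp_Gam {y : ℝ} (hy : y ≠ 0) : radialOp Vfun Gam y = 0 := by
  rw [radialOp, (hasDerivAt_deriv_Gam hy).deriv, (hasDerivAt_Gam hy).deriv,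
    (hasDerivAt_deriv_LamQ y).deriv, deriv_LamQ, Gam_eq_LamQ_mul, LamQ, Vfun]
  field_simp
  ring

theorem wronskian_LamQ_Gam {y : ℝ} (hy : y ≠ 0) :
    y * (LamQ y * deriv Gam y - deriv LamQ y * Gam y) = 1 := by
  rw [(hasDerivAt_Gam hy).deriv, Gam_eq_LamQ_mul, LamQ]
  field_simp
  ring

theorem hasDerivAt_integral_of_continuousOn_Ici {E : Type*} [NormedAddCommGroup E]
    [NormedSpace ℝ E] [CompleteSpace E] {h : ℝ → E} {a y : ℝ} (hh : ContinuousOn h (Ici a))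
    (hy : a < y) : HasDerivAt (fun y => ∫ x in a..y, h x) (h y) y := by
  have hnhds : Ici a ∈ 𝓝 y := mem_of_superset (Ioi_mem_nhds hy) Ioi_subset_Ici_self
  refine intervalIntegral.integral_hasDerivAt_right ?_
    (hh.stronglyMeasurableAtFilter_nhdsWithin measurableSet_Ici y |>.filter_mono ?_)
    (hh.continuousAt hnhds)
  · exact (hh.mono (by simp [uIcc_of_le hy.le, Icc_subset_Ici_self])).intervalIntegrable
  · exact le_of_eq (nhdsWithin_eq_nhds.2 hnhds).symm

theorem isBigO_integral_pow {E : Type*} [NormedAddCommGroup E] [NormedSpace ℝ E]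
    {g : ℝ → E} {n : ℕ} (hg : g =O[𝓝[>] 0] (fun x => x ^ n)) :
    (fun y => ∫ x in (0:ℝ)..y, g x) =O[𝓝[>] 0] (fun y => y ^ (n + 1)) := by
  obtain ⟨C, hC0, hC⟩ := hg.exists_pos
  obtain ⟨ε, hε, hbound⟩ := mem_nhdsGT_iff_exists_Ioo_subset.1 hC.bound
  refine IsBigO.of_bound C ?_
  filter_upwards [Ioo_mem_nhdsGT hε] with y ⟨hy0, hyε⟩
  have hint : ∀ x ∈ uIoc 0 y, ‖g x‖ ≤ C * y ^ n := by
    rintro x ⟨hx0, hxy⟩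
    rw [min_eq_left hy0.le] at hx0
    rw [max_eq_right hy0.le] at hxy
    calc ‖g x‖ ≤ C * ‖x ^ n‖ := hbound ⟨hx0, hxy.trans_lt hyε⟩
      _ ≤ C * y ^ n := by
        rw [norm_pow, Real.norm_of_nonneg hx0.le]
        gcongr
  calc ‖∫ x in (0:ℝ)..y, g x‖ ≤ C * y ^ n * |y - 0| :=
        intervalIntegral.norm_integral_le_of_norm_le_const hint
    _ = C * ‖y ^ (n + 1)‖ := by
        rw [sub_zero, abs_of_pos hy0, norm_pow, Real.norm_of_nonneg hy0.le, pow_succ]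
        ring

theorem LamQ_isBigO_id (l : Filter ℝ) : LamQ =O[l] (fun y => y) := by
  refine IsBigO.of_bound 2 (Eventually.of_forall fun y => ?_)
  rw [LamQ, norm_div, norm_mul, Real.norm_of_nonneg (by positivity : (0:ℝ) ≤ 1 + y ^ 2)]
  simp only [Real.norm_ofNat, Real.norm_eq_abs]
  exact div_le_self (by positivity) (by nlinarith [sq_nonneg y])

-- `Γ(x) x`, with its removable singularity at `0` filled in (`x log x → 0`)
noncomputable def GamMulId (x : ℝ) : ℝ :=
  x ^ 4 / (4 * (1 + x ^ 2)) + x * (x * log x) / (1 + x ^ 2) - 1 / (4 * (1 + x ^ 2))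

theorem Gam_mul_self {x : ℝ} (hx : x ≠ 0) : Gam x * x = GamMulId x := by
  unfold Gam GamMulId
  field_simp
  ring

theorem continuous_GamMulId : Continuous GamMulId := by
  have hden : ∀ x : ℝ, 1 + x ^ 2 ≠ 0 := fun x => by positivity
  unfold GamMulId
  exact ((continuous_pow 4).div (by fun_prop) (fun x => by positivity)).add
    ((continuous_id.mul continuous_mul_log).div (by fun_prop) hden) |>.sub
    (continuous_const.div (by fun_prop) (fun x => by positivity))

theorem intervalIntegral_mul_Gam_mul_self (f : ℝ → ℝ) (y : ℝ) :
    ∫ x in (0:ℝ)..y, f x * Gam x * x = ∫ x in (0:ℝ)..y, f x * GamMulId x := by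
  refine intervalIntegral.integral_congr_ae ?_
  filter_upwards [Measure.ae_ne volume 0] with x hx _
  rw [mul_assoc, Gam_mul_self hx]

theorem Gam_mul_self_isBigO_one : (fun x => Gam x * x) =O[𝓝[>] 0] (fun _ => (1:ℝ)) := by
  refine ((continuous_GamMulId.tendsto 0).mono_left nhdsWithin_le_nhds |>.isBigO_one ℝ).congr' ?_
    EventuallyEq.rfl
  filter_upwards [self_mem_nhdsWithin] with x (hx : 0 < x)
  exact (Gam_mul_self hx.ne').symm

theorem Gam_isBigO_inv : Gam =O[𝓝[>] 0] (fun x => x⁻¹) := by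
  refine (Gam_mul_self_isBigO_one.mul (isBigO_refl (fun x : ℝ => x⁻¹) _)).congr' ?_ (by simp)
  filter_upwards [self_mem_nhdsWithin] with x (hx : 0 < x)
  field_simp

section Hinv

variable {f : ℝ → ℝ} (hf : ContinuousOn f (Ici 0))
include hf

theorem hasDerivAt_integral_mul_Gam_mul_self {y : ℝ} (hy : 0 < y) :
    HasDerivAt (fun y => ∫ x in (0:ℝ)..y, f x * Gam x * x) (f y * y * Gam y) y := by
  simp_rw [intervalIntegral_mul_Gam_mul_self]
  refine (hasDerivAt_integral_of_continuousOn_Ici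
    (hf.mul continuous_GamMulId.continuousOn) hy).congr_deriv ?_
  rw [Pi.mul_apply, ← Gam_mul_self hy.ne']
  ring

theorem hasDerivAt_integral_mul_LamQ_mul_self {y : ℝ} (hy : 0 < y) :
    HasDerivAt (fun y => ∫ x in (0:ℝ)..y, f x * LamQ x * x) (f y * y * LamQ y) y :=
  (hasDerivAt_integral_of_continuousOn_Ici
    ((hf.mul (contDiff_LamQ (n := 0)).continuous.continuousOn).mul continuousOn_id)
    hy).congr_deriv (by simp only [Pi.mul_apply, id]; ring)

theorem contDiffOn_Hinv : ContDiffOn ℝ 2 (Hinv f) (Ioi 0) :=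
  contDiffOn_variationOfParameters isOpen_Ioi contDiff_LamQ.contDiffOn
    (contDiffOn_Gam.mono fun _ hy => ne_of_gt hy)
    (fun _ hy => hasDerivAt_integral_mul_Gam_mul_self hf hy)
    (fun _ hy => hasDerivAt_integral_mul_LamQ_mul_self hf hy)
    ((hf.mono Ioi_subset_Ici_self).mul continuousOn_id)

theorem radialOp_Hinv {y : ℝ} (hy : 0 < y) : radialOp Vfun (Hinv f) y = f y := by
  have h := radialOp_variationOfParameters isOpen_Ioi contDiff_LamQ.contDiffOn
    (contDiffOn_Gam.mono fun _ hy => ne_of_gt hy)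
    (fun _ hy => hasDerivAt_integral_mul_Gam_mul_self hf hy)
    (fun _ hy => hasDerivAt_integral_mul_LamQ_mul_self hf hy) (V := Vfun) hy
    (radialOp_LamQ hy.ne') (radialOp_Gam hy.ne') (wronskian_LamQ_Gam hy.ne')
  rwa [mul_div_cancel_right₀ _ hy.ne'] at h

theorem Hinv_isBigO_sq : Hinv f =O[𝓝[>] 0] (fun y => y ^ 2) := by
  have hf1 : f =O[𝓝[>] 0] (fun _ => (1:ℝ)) :=
    ((hf 0 self_mem_Ici).mono Ioi_subset_Ici_self).tendsto.isBigO_one ℝ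
  have hA : (fun y => ∫ x in (0:ℝ)..y, f x * Gam x * x) =O[𝓝[>] 0] (fun y => y ^ (0 + 1)) :=
    isBigO_integral_pow ((hf1.mul Gam_mul_self_isBigO_one).congr (fun _ => by ring)
      (fun _ => by simp))
  have hB : (fun y => ∫ x in (0:ℝ)..y, f x * LamQ x * x) =O[𝓝[>] 0] (fun y => y ^ (2 + 1)) :=
    isBigO_integral_pow ((hf1.mul ((LamQ_isBigO_id _).mul (isBigO_refl (fun x => x) _))).congr
      (fun _ => by ring) (fun _ => by ring))
  refine (((LamQ_isBigO_id _).mul hA).congr_right fun y => by ring).sub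
    ((Gam_isBigO_inv.mul hB).congr_right fun y => ?_)
  rcases eq_or_ne y 0 with rfl | hy
  · simp
  · field_simp

end Hinv

/-- `H⁻¹f` is a genuine right inverse of `H` on `(0,∞)` and is `O(y²)` at the origin. -/
theorem Hinv_is_right_inverse (f : ℝ → ℝ) (hf : ContinuousOn f (Set.Ici 0)) :
    ContDiffOn ℝ 2 (Hinv f) (Set.Ioi 0) ∧
    (∀ y > (0:ℝ),
      -(deriv (deriv (Hinv f)) y) - (1 / y) * deriv (Hinv f) y
        + Vfun y * Hinv f y / y ^ 2 = f y) ∧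
    Asymptotics.IsBigO (nhdsWithin 0 (Set.Ioi 0)) (Hinv f) (fun y => y ^ 2) :=
  ⟨contDiffOn_Hinv hf, fun _ hy => radialOp_Hinv hf hy, Hinv_isBigO_sq hf⟩
end

section
/- Let Z(y) = (1−y²)/(1+y²) and set Ṽ(y) = (1+Z(y))² − y·Z'(y). Then: (i) Ṽ(y) = 4/(1+y²) for all y ∈ ℝ; (ii) for every twice differentiable v : (0,∞) → ℝ and y > 0, (A(A*v))(y) = −v''(y) − (1/y)v'(y) + Ṽ(y)v(y)/y², where (Au)(y) = −u'(y) + Z(y)u(y)/y and (A*v)(y) = v'(y) + (1+Z(y))v(y)/y; (iii) the conjugate potential is repulsive: Ṽ(y) > 0 and (ΛṼ)(y) = y·Ṽ'(y) = −8y²/(1+y²)² ≤ 0 for all y > 0. -/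
open Real

/-- `Z(y) = (1-y²)/(1+y²)`. -/
noncomputable def Zfun (y : ℝ) : ℝ := (1 - y ^ 2) / (1 + y ^ 2)

/-- The conjugate potential `Ṽ(y) = (1+Z(y))² - y Z'(y)`. -/
noncomputable def Vtilde (y : ℝ) : ℝ := (1 + Zfun y) ^ 2 - y * deriv Zfun y

/-- `(Au)(y) = -u'(y) + Z(y)u(y)/y`. -/
noncomputable def Aop (u : ℝ → ℝ) : ℝ → ℝ := fun y => -deriv u y + Zfun y * u y / y

/-- `(A*v)(y) = v'(y) + (1+Z(y))v(y)/y`. -/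
noncomputable def Astarop (v : ℝ → ℝ) : ℝ → ℝ := fun y => deriv v y + (1 + Zfun y) * v y / y

/-!
Expanding `A (A* v)` with the product and quotient rules, the terms `± Z v'/y` combine to
`-v'/y` and the zeroth-order terms to `((1+Z)² - y Z') v / y²`, so the factorisation holds for
any differentiable `Z`. With `Z' = -4y/(1+y²)²` the potential simplifies to `Ṽ = 4/(1+y²)`,
which is positive and has `y Ṽ' = -8y²/(1+y²)²`.
-/

lemma hasDerivAt_one_add_sq (y : ℝ) : HasDerivAt (fun t : ℝ => 1 + t ^ 2) (2 * y) y := by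
  simpa using (hasDerivAt_pow 2 y).const_add 1

lemma hasDerivAt_Zfun (y : ℝ) : HasDerivAt Zfun (-4 * y / (1 + y ^ 2) ^ 2) y := by
  have hne : 1 + y ^ 2 ≠ 0 := by positivity
  have hnum : HasDerivAt (fun t : ℝ => 1 - t ^ 2) (-(2 * y)) y := by
    simpa using (hasDerivAt_pow 2 y).const_sub 1
  refine (hnum.div (hasDerivAt_one_add_sq y) hne).congr_deriv ?_
  field_simp
  ring

lemma differentiable_Zfun : Differentiable ℝ Zfun :=
  fun y => (hasDerivAt_Zfun y).differentiableAt

lemma Vtilde_eq (y : ℝ) : Vtilde y = 4 / (1 + y ^ 2) := by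
  have hne : 1 + y ^ 2 ≠ 0 := by positivity
  simp only [Vtilde, Zfun, (hasDerivAt_Zfun y).deriv]
  field_simp
  ring

lemma Vtilde_pos (y : ℝ) : 0 < Vtilde y := by
  rw [Vtilde_eq]
  positivity

lemma hasDerivAt_Vtilde (y : ℝ) : HasDerivAt Vtilde (-8 * y / (1 + y ^ 2) ^ 2) y := by
  have hne : 1 + y ^ 2 ≠ 0 := by positivity
  rw [show Vtilde = fun t => 4 / (1 + t ^ 2) from funext Vtilde_eq]
  refine ((hasDerivAt_const y (4 : ℝ)).div (hasDerivAt_one_add_sq y) hne).congr_deriv ?_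
  field_simp
  ring

lemma mul_deriv_Vtilde (y : ℝ) : y * deriv Vtilde y = -8 * y ^ 2 / (1 + y ^ 2) ^ 2 := by
  rw [(hasDerivAt_Vtilde y).deriv]
  ring

lemma mul_deriv_Vtilde_nonpos (y : ℝ) : y * deriv Vtilde y ≤ 0 := by
  rw [mul_deriv_Vtilde, neg_mul, neg_div]
  exact neg_nonpos.mpr (by positivity)

lemma hasDerivAt_Astarop {v : ℝ → ℝ} {y : ℝ} (hy : y ≠ 0) (hv : DifferentiableAt ℝ v y)
    (hv' : DifferentiableAt ℝ (deriv v) y) :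
    HasDerivAt (Astarop v)
      (deriv (deriv v) y +
        ((deriv Zfun y * v y + (1 + Zfun y) * deriv v y) * y - (1 + Zfun y) * v y) / y ^ 2) y := by
  have hquot := (((differentiable_Zfun y).hasDerivAt.const_add 1).mul hv.hasDerivAt).div
    (hasDerivAt_id y) hy
  simp only [id, mul_one] at hquot
  exact hv'.hasDerivAt.add hquot

theorem Aop_Astarop_apply {v : ℝ → ℝ} {y : ℝ} (hy : y ≠ 0) (hv : DifferentiableAt ℝ v y)
    (hv' : DifferentiableAt ℝ (deriv v) y) :
    Aop (Astarop v) y = -deriv (deriv v) y - (1 / y) * deriv v y + Vtilde y * v y / y ^ 2 := by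
  simp only [Aop, (hasDerivAt_Astarop hy hv hv').deriv, Astarop, Vtilde]
  field_simp
  ring

/-- The super-symmetric conjugate Hamiltonian `H̃ = A A*` has potential
`Ṽ = 4/(1+y²)`, which is positive with `ΛṼ ≤ 0` (the repulsive property). -/
theorem conjugate_Hamiltonian_repulsive :
    (∀ y : ℝ, Vtilde y = 4 / (1 + y ^ 2)) ∧
    (∀ v : ℝ → ℝ, (∀ y ∈ Set.Ioi (0:ℝ), DifferentiableAt ℝ v y) →
      (∀ y ∈ Set.Ioi (0:ℝ), DifferentiableAt ℝ (deriv v) y) →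
      ∀ y > (0:ℝ),
        Aop (Astarop v) y
          = -(deriv (deriv v) y) - (1 / y) * deriv v y + Vtilde y * v y / y ^ 2) ∧
    (∀ y > (0:ℝ),
      0 < Vtilde y ∧ y * deriv Vtilde y = -8 * y ^ 2 / (1 + y ^ 2) ^ 2 ∧
        y * deriv Vtilde y ≤ 0) :=
  ⟨Vtilde_eq,
    fun _ hv hv' y hy => Aop_Astarop_apply hy.ne' (hv y hy) (hv' y hy),
    fun y _ => ⟨Vtilde_pos y, mul_deriv_Vtilde y, mul_deriv_Vtilde_nonpos y⟩⟩
end
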